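/- arXiv:2208.02636 — 7 statements merged into one kernel-verified Lean document; each statement's English description precedes it below -/
import Mathlib

section
/- Let λ ∈ ℂ*, a, b ∈ ℂ, q ∈ ℕ, and τ_0,…,τ_q ∈ tℂ[t]. Define Y_m · f(s,t,v) = λ^m [ (m·Σ_{i=0}^q τ_i v^i + v + a m² t + (1-δ_{m,0}) b) f(s+m,t,v) + m t ∂f/∂v(s+m,t,v) ] and M_m · f(s,t,v) = λ^m t f(s+m,t,v). Then for all m, n ∈ ℤ: Y_m·(Y_n·f) - Y_n·(Y_m·f) = (m-n)·M_{m+n}·f, i.e. the relation [Y_m, Y_n] = (m-n)M_{m+n} holds on ℂ[s,t,v]. -/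
open MvPolynomial

noncomputable section

/-- `ℂ[s,t,v]` with `s = X 0`, `t = X 1`, `v = X 2`. -/
abbrev R3 : Type := MvPolynomial (Fin 3) ℂ

/-- The shift `f(s,t,v) ↦ f(s+m,t,v)`. -/
def shiftS (m : ℤ) : R3 →ₐ[ℂ] R3 :=
  aeval (fun i => if i = 0 then X 0 + C (m : ℂ) else X i)

/-- Embedding `ℂ[t] → ℂ[s,t,v]`, `t ↦ X 1`. -/
def tp (p : Polynomial ℂ) : R3 := Polynomial.aeval (X 1 : R3) p

/-- The action `M_m · f(s,t,v) = λ^m t f(s+m,t,v)`. -/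
def Mact (lam : ℂ) (m : ℤ) (f : R3) : R3 := lam ^ m • (X 1 * shiftS m f)

/-- The action
`Y_m · f = λ^m [(m Σ_{i=0}^q τ_i v^i + v + a m² t + (1-δ_{m,0}) b) f(s+m,t,v)
  + m t ∂f/∂v(s+m,t,v)]`. -/
def Yact (lam a b : ℂ) (q : ℕ) (τ : ℕ → Polynomial ℂ) (m : ℤ) (f : R3) : R3 :=
  lam ^ m •
    (((m : ℂ) • (∑ i ∈ Finset.range (q + 1), tp (τ i) * X 2 ^ i) + X 2
        + C (a * (m : ℂ) ^ 2) * X 1 + C (if m = 0 then 0 else b)) * shiftS m f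
      + (m : ℂ) • (X 1 * pderiv 2 (shiftS m f)))

/-! `Y_m` is `λ^m` times the first-order operator `f ↦ A_m σ_m f + B_m ∂_v (σ_m f)`, where `σ_m` is
the shift in `s` and the coefficients `A_m = m Σ τ_i v^i + v + a m² t + (1 - δ_{m,0}) b` and
`B_m = m t` do not involve `s`. For two such operators with commuting shifts that commute with
`∂_v`, the zeroth- and second-order terms of the commutator cancel by symmetry, leaving
`(B_m ∂_v A_n - B_n ∂_v A_m) σ_{m+n} + (B_m ∂_v B_n - B_n ∂_v B_m) ∂_v σ_{m+n}`.
Here `∂_v B = 0` and `∂_v A_n = n ∂_v (Σ τ_i v^i) + 1`, so the `τ`-terms cancel too and only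
`(m - n) t σ_{m+n}` remains. -/

section FirstOrder

variable {K R : Type*} [CommSemiring K] [CommRing R] [Algebra K R] (D : Derivation K R R)

def firstOrderOp (σ : R →ₐ[K] R) (A B f : R) : R := A * σ f + B * D (σ f)

variable {D}

lemma firstOrderOp_smul (σ : R →ₐ[K] R) (A B : R) (c : K) (f : R) :
    firstOrderOp D σ A B (c • f) = c • firstOrderOp D σ A B f := by
  simp only [firstOrderOp, map_smul, Derivation.map_smul, mul_smul_comm, smul_add]

lemma firstOrderOp_firstOrderOp {σ σ' : R →ₐ[K] R} (hσ : ∀ g, σ (D g) = D (σ g))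
    {A' B' : R} (hA' : σ A' = A') (hB' : σ B' = B') (A B f : R) :
    firstOrderOp D σ A B (firstOrderOp D σ' A' B' f)
      = (A * A' + B * D A') * σ (σ' f) + (A * B' + B * A' + B * D B') * D (σ (σ' f))
        + B * B' * D (D (σ (σ' f))) := by
  simp only [firstOrderOp, map_add, map_mul, hA', hB', hσ, Derivation.leibniz, smul_eq_mul]
  ring

lemma firstOrderOp_commutator {σ τ : R →ₐ[K] R} (hστ : ∀ g, σ (τ g) = τ (σ g))
    (hσ : ∀ g, σ (D g) = D (σ g)) (hτ : ∀ g, τ (D g) = D (τ g))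
    {A B A' B' : R} (hσA' : σ A' = A') (hσB' : σ B' = B') (hτA : τ A = A) (hτB : τ B = B)
    (f : R) :
    firstOrderOp D σ A B (firstOrderOp D τ A' B' f)
        - firstOrderOp D τ A' B' (firstOrderOp D σ A B f)
      = (B * D A' - B' * D A) * σ (τ f) + (B * D B' - B' * D B) * D (σ (τ f)) := by
  rw [firstOrderOp_firstOrderOp hσ hσA' hσB', firstOrderOp_firstOrderOp hτ hτA hτB, hστ]
  ring

end FirstOrder

lemma shiftS_X1 (m : ℤ) : shiftS m (X 1) = X 1 := by simp [shiftS]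

lemma shiftS_X2 (m : ℤ) : shiftS m (X 2) = X 2 := by simp [shiftS]

lemma shiftS_C (m : ℤ) (c : ℂ) : shiftS m (C c) = C c := (shiftS m).commutes c

lemma shiftS_tp (m : ℤ) (p : Polynomial ℂ) : shiftS m (tp p) = tp p := by
  rw [tp, ← Polynomial.aeval_algHom_apply, shiftS_X1]

lemma shiftS_shiftS (m n : ℤ) (f : R3) : shiftS m (shiftS n f) = shiftS (m + n) f := by
  have h : (shiftS m).comp (shiftS n) = shiftS (m + n) := by
    refine MvPolynomial.algHom_ext fun i => ?_
    fin_cases i <;> simp [shiftS]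
    ring
  exact AlgHom.congr_fun h f

lemma shiftS_pderiv_two (m : ℤ) (f : R3) : shiftS m (pderiv 2 f) = pderiv 2 (shiftS m f) := by
  induction f using MvPolynomial.induction_on with
  | C c => simp
  | add p q hp hq => simp only [map_add, hp, hq]
  | mul_X p i hp =>
    simp only [Derivation.leibniz, smul_eq_mul, map_add, map_mul, hp]
    fin_cases i <;> simp [shiftS, pderiv_X]

lemma pderiv_two_X1 : pderiv (2 : Fin 3) (X 1 : R3) = 0 := pderiv_X_of_ne (by decide)

def tauSum (q : ℕ) (τ : ℕ → Polynomial ℂ) : R3 :=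
  ∑ i ∈ Finset.range (q + 1), tp (τ i) * X 2 ^ i

def yCoeff (a b : ℂ) (q : ℕ) (τ : ℕ → Polynomial ℂ) (m : ℤ) : R3 :=
  (m : ℂ) • tauSum q τ + X 2 + C (a * (m : ℂ) ^ 2) * X 1 + C (if m = 0 then 0 else b)

lemma shiftS_yCoeff (a b : ℂ) (q : ℕ) (τ : ℕ → Polynomial ℂ) (k m : ℤ) :
    shiftS k (yCoeff a b q τ m) = yCoeff a b q τ m := by
  simp [yCoeff, tauSum, map_sum, shiftS_tp, shiftS_X1, shiftS_X2]

lemma pderiv_two_yCoeff (a b : ℂ) (q : ℕ) (τ : ℕ → Polynomial ℂ) (m : ℤ) :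
    pderiv 2 (yCoeff a b q τ m) = (m : ℂ) • pderiv 2 (tauSum q τ) + 1 := by
  simp [yCoeff]

lemma Yact_eq_firstOrderOp (lam a b : ℂ) (q : ℕ) (τ : ℕ → Polynomial ℂ) (m : ℤ) (f : R3) :
    Yact lam a b q τ m f
      = lam ^ m • firstOrderOp (pderiv 2) (shiftS m) (yCoeff a b q τ m) (C (m : ℂ) * X 1) f := by
  rw [Yact, firstOrderOp, yCoeff, tauSum, mul_assoc, smul_eq_C_mul (X 1 * _)]

theorem stmt_6_general (lam : ℂ) (hlam : lam ≠ 0) (a b : ℂ) (q : ℕ)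
    (τ : ℕ → Polynomial ℂ) :
    ∀ (m n : ℤ) (f : R3),
      Yact lam a b q τ m (Yact lam a b q τ n f)
        - Yact lam a b q τ n (Yact lam a b q τ m f)
      = ((m : ℂ) - (n : ℂ)) • Mact lam (m + n) f := by
  intro m n f
  have hpow : lam ^ (m + n) = lam ^ m * lam ^ n := zpow_add₀ hlam m n
  have hmX1 (k l : ℤ) : shiftS k (C (l : ℂ) * X 1) = C (l : ℂ) * X 1 := by
    rw [map_mul, shiftS_C, shiftS_X1]
  simp only [Yact_eq_firstOrderOp, firstOrderOp_smul, smul_smul, mul_comm (lam ^ n), ← smul_sub]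
  rw [firstOrderOp_commutator (fun g => by rw [shiftS_shiftS, shiftS_shiftS, add_comm])
    (shiftS_pderiv_two m) (shiftS_pderiv_two n) (shiftS_yCoeff ..) (hmX1 m n)
    (shiftS_yCoeff ..) (hmX1 n m), pderiv_two_yCoeff, pderiv_two_yCoeff, shiftS_shiftS, Mact, hpow]
  simp only [Derivation.leibniz, pderiv_C, pderiv_two_X1, smul_eq_C_mul, map_sub, smul_zero,
    add_zero]
  ring

/-- For `λ ∈ ℂ*`, `a, b ∈ ℂ`, `q ∈ ℕ`, `τ_0, …, τ_q ∈ tℂ[t]`, the operators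
`Y_m` and `M_m` on `ℂ[s,t,v]` satisfy `[Y_m, Y_n] = (m-n) M_{m+n}`. -/
theorem stmt_6 (lam : ℂ) (hlam : lam ≠ 0) (a b : ℂ) (q : ℕ)
    (τ : ℕ → Polynomial ℂ) (hτ : ∀ i ≤ q, Polynomial.X ∣ τ i) :
    ∀ (m n : ℤ) (f : R3),
      Yact lam a b q τ m (Yact lam a b q τ n f)
        - Yact lam a b q τ n (Yact lam a b q τ m f)
      = ((m : ℂ) - (n : ℂ)) • Mact lam (m + n) f :=
  stmt_6_general lam hlam a b q τ

end
end

section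
/- Let λ ∈ ℂ*, a, b ∈ ℂ, q ∈ ℕ, and τ_0,…,τ_q ∈ tℂ[t]. With the actions Y_m·f = λ^m[(mΣτ_iv^i + v + am²t + (1-δ_{m,0})b)f(s+m) + mt ∂_v f(s+m)] and M_n·f = λ^n t f(s+n), one has Y_m·(M_n·f) - M_n·(Y_m·f) = 0 for all m, n ∈ ℤ and f ∈ ℂ[s,t,v], consistent with [Y_m, M_n] = 0. -/
open MvPolynomial

noncomputable section

/-!
The operator `Y_m` is `ℂ`-linear and commutes with multiplication by `t`, since `∂_v t = 0`.
It also commutes with every shift `s ↦ s + n`: its coefficients do not involve `s`, and a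
translation of the variables commutes with partial derivatives. As `M_n` is `λ^n` times
multiplication by `t` after such a shift, `Y_m` and `M_n` commute.
-/

theorem MvPolynomial.pderiv_aeval_X_add_C {σ R : Type*} [CommSemiring R] (c : σ → R) (i : σ)
    (f : MvPolynomial σ R) :
    pderiv i (aeval (fun j => X j + C (c j)) f) = aeval (fun j => X j + C (c j)) (pderiv i f) := by
  induction f using MvPolynomial.induction_on with
  | C r => simp
  | add p q hp hq => simp only [map_add, hp, hq]
  | mul_X p j hp =>
    simp only [map_mul, aeval_X, Derivation.leibniz, hp, map_add, pderiv_C, add_zero,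
      smul_eq_mul]
    by_cases h : i = j
    · simp [h]
    · simp [Ne.symm h]

namespace shiftS

theorem eq_aeval_X_add_C (m : ℤ) :
    shiftS m = aeval (fun j => X j + C (if j = 0 then (m : ℂ) else 0)) := by
  unfold shiftS
  congr 1
  funext j
  split_ifs <;> simp [*]

@[simp] theorem apply_X_one (m : ℤ) : shiftS m (X 1) = X 1 := by simp [shiftS]

@[simp] theorem apply_X_two (m : ℤ) : shiftS m (X 2) = X 2 := by simp [shiftS]

@[simp] theorem apply_C (m : ℤ) (c : ℂ) : shiftS m (C c) = C c := (shiftS m).commutes c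

@[simp] theorem apply_tp (m : ℤ) (p : Polynomial ℂ) : shiftS m (tp p) = tp p := by
  simp [tp, ← Polynomial.aeval_algHom_apply]

theorem apply_apply (m n : ℤ) (f : R3) : shiftS m (shiftS n f) = shiftS (m + n) f := by
  suffices (shiftS m).comp (shiftS n) = shiftS (m + n) from AlgHom.congr_fun this f
  refine algHom_ext fun i => ?_
  fin_cases i <;> simp [shiftS, add_assoc]

theorem comm (m n : ℤ) (f : R3) : shiftS m (shiftS n f) = shiftS n (shiftS m f) := by
  rw [apply_apply, apply_apply, add_comm]

theorem pderiv_apply (m : ℤ) (i : Fin 3) (f : R3) :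
    pderiv i (shiftS m f) = shiftS m (pderiv i f) := by
  rw [eq_aeval_X_add_C, pderiv_aeval_X_add_C]

end shiftS

section Yact

variable (lam a b : ℂ) (q : ℕ) (τ : ℕ → Polynomial ℂ) (m : ℤ)

theorem Yact_smul (c : ℂ) (f : R3) : Yact lam a b q τ m (c • f) = c • Yact lam a b q τ m f := by
  simp only [Yact, map_smul, Derivation.map_smul, mul_smul_comm, smul_add, smul_comm c]

theorem Yact_X_one_mul (f : R3) :
    Yact lam a b q τ m (X 1 * f) = X 1 * Yact lam a b q τ m f := by
  simp only [Yact, map_mul, shiftS.apply_X_one, Derivation.leibniz,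
    pderiv_X_of_ne (show (1 : Fin 3) ≠ 2 by decide), mul_zero, add_zero,
    smul_eq_mul, mul_smul_comm, mul_add]
  rw [mul_left_comm]

theorem Yact_shiftS (n : ℤ) (f : R3) :
    Yact lam a b q τ m (shiftS n f) = shiftS n (Yact lam a b q τ m f) := by
  simp only [Yact, map_smul, map_add, map_mul, map_sum, map_pow, shiftS.apply_X_one, shiftS.apply_X_two,
    shiftS.apply_C, shiftS.apply_tp, shiftS.pderiv_apply, shiftS.comm m n]

end Yact

theorem stmt_7_general (lam : ℂ) (a b : ℂ) (q : ℕ)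
    (τ : ℕ → Polynomial ℂ) :
    ∀ (m n : ℤ) (f : R3),
      Yact lam a b q τ m (Mact lam n f) - Mact lam n (Yact lam a b q τ m f) = 0 := by
  intro m n f
  rw [sub_eq_zero, Mact, Mact, Yact_smul, Yact_X_one_mul, Yact_shiftS]

/-- For `λ ∈ ℂ*`, `a, b ∈ ℂ`, `q ∈ ℕ`, `τ_0, …, τ_q ∈ tℂ[t]`, the operators
`Y_m` and `M_n` on `ℂ[s,t,v]` commute, consistent with `[Y_m, M_n] = 0`. -/
theorem stmt_7 (lam : ℂ) (hlam : lam ≠ 0) (a b : ℂ) (q : ℕ)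
    (τ : ℕ → Polynomial ℂ) (hτ : ∀ i ≤ q, Polynomial.X ∣ τ i) :
    ∀ (m n : ℤ) (f : R3),
      Yact lam a b q τ m (Mact lam n f) - Mact lam n (Yact lam a b q τ m f) = 0 :=
  stmt_7_general lam a b q τ
end
end

section
/- Let B be a 𝔱𝔰𝔳-module that is free of rank 1 as a module over U(ℂL_0 ⊕ ℂM_0 ⊕ ℂY_0) ≅ ℂ[L_0, M_0, Y_0]. Writing M_m·1 = a_m(L_0,M_0,Y_0), then a_m ≠ 0 for every m ∈ ℤ. -/
open MvPolynomial

/-!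
If `M_m · 1 = 0`, the relations `[L_0, M_m] = -m M_m`, `[M_0, M_m] = 0`, `[Y_0, M_m] = 0` say that
`M_m` turns multiplication by each variable into some endomorphism, so `M_m` kills every
polynomial and `M_m = 0`. Then `[L_{-m}, M_m] = 2m M_0` forces `m = 0`, but `M_0 · 1 = M_0 ≠ 0`.
-/

theorem mul_eq_sub_smul_one_mul_of_lie_eq_smul {R A : Type*} [CommRing R] [Ring A] [Algebra R A]
    {a t : A} {c : R} (h : ⁅a, t⁆ = c • t) : t * a = (a - c • 1) * t := by
  rw [Ring.lie_def] at h
  rw [sub_mul, smul_mul_assoc, one_mul, ← h, sub_sub_cancel]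

namespace MvPolynomial

variable {R σ V : Type*} [CommSemiring R] [AddCommMonoid V] [Module R V]

theorem linearMap_eq_zero_of_map_one_eq_zero (T : MvPolynomial σ R →ₗ[R] V)
    (hX : ∀ i, ∃ g : Module.End R V, ∀ f, T (X i * f) = g (T f)) (h1 : T 1 = 0) : T = 0 := by
  refine LinearMap.ext fun f => ?_
  rw [LinearMap.zero_apply]
  induction f using MvPolynomial.induction_on with
  | C a => rw [C_eq_smul_one, map_smul, h1, smul_zero]
  | add p q hp hq => rw [map_add, hp, hq, add_zero]
  | mul_X p i hp =>
    obtain ⟨g, hg⟩ := hX i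
    rw [mul_comm, hg, hp, map_zero]

end MvPolynomial

theorem MvPolynomial.exists_map_X_mul_eq_of_lie_eq_smul {R σ : Type*} [CommRing R]
    {A T : Module.End R (MvPolynomial σ R)} {c : R} {i : σ} (hA : ∀ f, A f = X i * f)
    (h : ⁅A, T⁆ = c • T) : ∃ g : Module.End R (MvPolynomial σ R), ∀ f, T (X i * f) = g (T f) :=
  ⟨A - c • 1, fun f => by
    rw [← hA, ← Module.End.mul_apply, mul_eq_sub_smul_one_mul_of_lie_eq_smul h,
      Module.End.mul_apply]⟩

theorem stmt_10_general
    (L Y M : ℤ → Module.End ℂ (MvPolynomial (Fin 3) ℂ))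
    (hLM : ∀ m n : ℤ, ⁅L m, M n⁆ = (-(3 * (m : ℂ) + (n : ℂ))) • M (m + n))
    (hYM : ∀ m n : ℤ, ⁅Y m, M n⁆ = 0)
    (hMM : ∀ m n : ℤ, ⁅M m, M n⁆ = 0)
    (hL0 : ∀ f : MvPolynomial (Fin 3) ℂ, L 0 f = X 0 * f)
    (hM0 : ∀ f : MvPolynomial (Fin 3) ℂ, M 0 f = X 1 * f)
    (hY0 : ∀ f : MvPolynomial (Fin 3) ℂ, Y 0 f = X 2 * f) :
    ∀ m : ℤ, M m 1 ≠ 0 := by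
  intro m hm
  have hM0_ne : M 0 ≠ 0 := fun h => X_ne_zero (R := ℂ) (1 : Fin 3) <| by
    simpa [h] using (hM0 1).symm
  have hMm : M m = 0 := by
    refine linearMap_eq_zero_of_map_one_eq_zero (M m) (fun i => ?_) hm
    fin_cases i
    · exact exists_map_X_mul_eq_of_lie_eq_smul hL0 (by simpa using hLM 0 m)
    · exact exists_map_X_mul_eq_of_lie_eq_smul hM0 (c := 0) (by rw [hMM, zero_smul])
    · exact exists_map_X_mul_eq_of_lie_eq_smul hY0 (c := 0) (by rw [hYM, zero_smul])
  have h2m : (2 * (m : ℂ)) • M 0 = 0 :=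
    calc (2 * (m : ℂ)) • M 0 = (-(3 * ((-m : ℤ) : ℂ) + (m : ℂ))) • M (-m + m) := by
          rw [neg_add_cancel]; push_cast; ring_nf
      _ = ⁅L (-m), M m⁆ := (hLM (-m) m).symm
      _ = 0 := by rw [hMm, Ring.lie_def, mul_zero, zero_mul, sub_zero]
  obtain rfl : m = 0 := by simpa using (smul_eq_zero.mp h2m).resolve_right hM0_ne
  exact hM0_ne hMm

/-- Lemma 3.2: Let `B` be a 𝔱𝔰𝔳-module that is free of rank 1 over
`U(ℂL₀ ⊕ ℂM₀ ⊕ ℂY₀) ≅ ℂ[L₀, M₀, Y₀]`; we identify `B` with the polynomial ring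
`ℂ[L₀, M₀, Y₀] = MvPolynomial (Fin 3) ℂ` (with `L₀ = X 0`, `M₀ = X 1`, `Y₀ = X 2`),
the 𝔱𝔰𝔳-action being given by linear endomorphisms `L m`, `Y m`, `M m` satisfying the
commutation relations of 𝔱𝔰𝔳, with `L 0`, `M 0`, `Y 0` acting by multiplication by
the respective variables. Then `a_m = M_m · 1 ≠ 0` for every `m ∈ ℤ`. -/
theorem stmt_10
    (L Y M : ℤ → Module.End ℂ (MvPolynomial (Fin 3) ℂ))
    (hLL : ∀ m n : ℤ, ⁅L m, L n⁆ = ((m : ℂ) - (n : ℂ)) • L (m + n))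
    (hLY : ∀ m n : ℤ, ⁅L m, Y n⁆ = (-((m : ℂ) + (n : ℂ))) • Y (m + n))
    (hLM : ∀ m n : ℤ, ⁅L m, M n⁆ = (-(3 * (m : ℂ) + (n : ℂ))) • M (m + n))
    (hYY : ∀ m n : ℤ, ⁅Y m, Y n⁆ = ((m : ℂ) - (n : ℂ)) • M (m + n))
    (hYM : ∀ m n : ℤ, ⁅Y m, M n⁆ = 0)
    (hMM : ∀ m n : ℤ, ⁅M m, M n⁆ = 0)
    (hL0 : ∀ f : MvPolynomial (Fin 3) ℂ, L 0 f = X 0 * f)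
    (hM0 : ∀ f : MvPolynomial (Fin 3) ℂ, M 0 f = X 1 * f)
    (hY0 : ∀ f : MvPolynomial (Fin 3) ℂ, Y 0 f = X 2 * f) :
    ∀ m : ℤ, M m 1 ≠ 0 :=
  stmt_10_general L Y M hLM hYM hMM hL0 hM0 hY0
end

section
/- Let B = ℂ[L_0,M_0,Y_0] be a rank-1 free U(ℂL_0⊕ℂM_0⊕ℂY_0)-module over 𝔱𝔰𝔳 with M_m·1 = a_m(L_0,M_0,Y_0) ≠ 0 for all m. Then each a_m does not involve L_0, i.e. a_m ∈ ℂ[M_0,Y_0] \ {0}. -/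
/-!
As `M₀` and `Y₀` commute with `M_m` and `[L₀, M_m] = -m M_m`, the operator `M_m` is
`u ↦ u(L₀ + m, M₀, Y₀) · a_m`. Applied to `1`, `[M_m, M_n] = 0` then reads
`a_n(L₀ + m) · a_m = a_m(L₀ + n) · a_n`. Viewing both sides as polynomials in `L₀` and
comparing the coefficients just below the leading one gives `deg a_n · m = deg a_m · n`, and
taking `n = -m` (or `m = 1, n = 0`) forces every `deg a_m` to vanish.
-/

namespace Polynomial

theorem nextCoeff_mul_of_leadingCoeff_mul_ne_zero {R : Type*} [Semiring R] {p q : R[X]}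
    (h : p.leadingCoeff * q.leadingCoeff ≠ 0) :
    (p * q).nextCoeff = p.leadingCoeff * q.nextCoeff + p.nextCoeff * q.leadingCoeff := by
  simp only [← coeff_one_reverse, ← coeff_zero_reverse, reverse_mul h, mul_coeff_one]

theorem nextCoeff_taylor {R : Type*} [CommSemiring R] (p : R[X]) (c : R) :
    (taylor c p).nextCoeff = p.nextCoeff + p.natDegree * c * p.leadingCoeff := by
  obtain h | ⟨e, he⟩ : p.natDegree = 0 ∨ ∃ e, p.natDegree = e + 1 :=
    (Nat.eq_zero_or_eq_succ_pred _).imp_right fun h => ⟨_, h⟩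
  · rw [eq_C_of_natDegree_eq_zero h]
    simp [nextCoeff_C_eq_zero]
  have hdeg : (hasseDeriv e p).natDegree < 2 := by
    have := natDegree_hasseDeriv_le p e
    omega
  rw [nextCoeff_of_natDegree_pos (by rw [natDegree_taylor]; omega),
    nextCoeff_of_natDegree_pos (by omega), natDegree_taylor, leadingCoeff, he,
    Nat.add_sub_cancel, taylor_coeff, eval_eq_sum_range' hdeg]
  simp only [Finset.sum_range_succ, Finset.sum_range_zero, hasseDeriv_coeff, zero_add,
    Nat.choose_self, Nat.cast_one, one_mul, pow_zero, mul_one, pow_one, add_comm 1 e,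
    Nat.choose_succ_self_right]
  push_cast
  ring

theorem natDegree_mul_eq_of_taylor_mul_comm {R : Type*} [CommRing R] [IsDomain R]
    {p q : R[X]} (hp : p ≠ 0) (hq : q ≠ 0) {c d : R}
    (h : taylor c p * q = taylor d q * p) :
    (p.natDegree : R) * c = q.natDegree * d := by
  have hpq : p.leadingCoeff * q.leadingCoeff ≠ 0 :=
    mul_ne_zero (leadingCoeff_ne_zero.2 hp) (leadingCoeff_ne_zero.2 hq)
  have hqp : q.leadingCoeff * p.leadingCoeff ≠ 0 := by rwa [mul_comm]
  have h' := congrArg nextCoeff h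
  rw [nextCoeff_mul_of_leadingCoeff_mul_ne_zero (by rwa [leadingCoeff_taylor]),
    nextCoeff_mul_of_leadingCoeff_mul_ne_zero (by rwa [leadingCoeff_taylor]),
    nextCoeff_taylor, nextCoeff_taylor, leadingCoeff_taylor, leadingCoeff_taylor] at h'
  apply mul_right_cancel₀ hpq
  linear_combination h'

theorem natDegree_eq_zero_of_taylor_mul_comm {R : Type*} [CommRing R] [IsDomain R] [CharZero R]
    {a : ℤ → R[X]} (ha : ∀ m, a m ≠ 0)
    (h : ∀ m n : ℤ, taylor (m : R) (a n) * a m = taylor (n : R) (a m) * a n) (m : ℤ) :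
    (a m).natDegree = 0 := by
  have hdeg (m n : ℤ) : ((a n).natDegree : R) * m = (a m).natDegree * n :=
    natDegree_mul_eq_of_taylor_mul_comm (ha n) (ha m) (h m n)
  rcases eq_or_ne m 0 with rfl | hm
  · have h0 := hdeg 1 0
    rw [Int.cast_zero, Int.cast_one, mul_zero, mul_one] at h0
    exact_mod_cast h0
  have hsum : (((a (-m)).natDegree + (a m).natDegree : ℕ) : R) * m = 0 := by
    have := hdeg m (-m)
    push_cast at this ⊢
    linear_combination this
  have := (mul_eq_zero.1 hsum).resolve_right (Int.cast_ne_zero.2 hm)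
  exact_mod_cast (Nat.add_eq_zero_iff.1 (Nat.cast_eq_zero.1 this)).2

end Polynomial

open MvPolynomial

theorem map_mul_eq_of_lie_eq_smul {R S : Type*} [CommRing R] [CommRing S] [Algebra R S]
    {A B : Module.End R S} {x : S} {r : R} (hA : ∀ f, A f = x * f) (h : ⁅A, B⁆ = r • B)
    (f : S) : B (x * f) = (x - algebraMap R S r) * B f := by
  have h' := LinearMap.congr_fun h f
  simp only [Ring.lie_def, LinearMap.sub_apply, Module.End.mul_apply, hA,
    LinearMap.smul_apply] at h'
  rw [Algebra.smul_def] at h'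
  linear_combination -h'

namespace MvPolynomial

theorem linearMap_apply_eq_aeval_mul {σ R : Type*} [CommSemiring R]
    (T : MvPolynomial σ R →ₗ[R] MvPolynomial σ R) (s : σ → MvPolynomial σ R)
    (hT : ∀ i f, T (X i * f) = s i * T f) (u : MvPolynomial σ R) :
    T u = aeval s u * T 1 := by
  induction u using MvPolynomial.induction_on with
  | C a => rw [aeval_C, algebraMap_eq, ← smul_eq_C_mul, ← map_smul, smul_eq_C_mul, mul_one]
  | add p q hp hq => rw [map_add, map_add, add_mul, hp, hq]
  | mul_X p i hp => rw [mul_comm, hT, hp, map_mul, aeval_X]; ring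

theorem aeval_apply_one_mul_comm_of_commute {σ R : Type*} [CommSemiring R]
    {T S : MvPolynomial σ R →ₗ[R] MvPolynomial σ R} {s t : σ → MvPolynomial σ R}
    (hT : ∀ i f, T (X i * f) = s i * T f) (hS : ∀ i f, S (X i * f) = t i * S f)
    (h : Commute T S) : aeval s (S 1) * T 1 = aeval t (T 1) * S 1 := by
  rw [← linearMap_apply_eq_aeval_mul T s hT, ← linearMap_apply_eq_aeval_mul S t hS]
  exact LinearMap.congr_fun h.eq 1

theorem finSuccEquiv_aeval_cons_add_C {R : Type*} [CommSemiring R] {n : ℕ} (c : R)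
    (u : MvPolynomial (Fin (n + 1)) R) :
    finSuccEquiv R n (aeval (Fin.cons (X 0 + C c) fun i => X i.succ) u) =
      Polynomial.taylor (C c) (finSuccEquiv R n u) := by
  have : (finSuccEquiv R n).toAlgHom.comp (aeval (Fin.cons (X 0 + C c) fun i => X i.succ)) =
      ((Polynomial.taylorAlgHom (C c)).restrictScalars R).comp (finSuccEquiv R n).toAlgHom := by
    refine algHom_ext fun i => Fin.cases ?_ (fun j => ?_) i
    · simp [finSuccEquiv_apply]
    · simp [finSuccEquiv_X_succ]
  exact DFunLike.congr_fun this u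

theorem mem_supported_compl_singleton_iff {σ R : Type*} [CommSemiring R] {p : MvPolynomial σ R}
    {i : σ} : p ∈ supported R {i}ᶜ ↔ p.degreeOf i = 0 := by
  rw [mem_supported, Set.subset_compl_singleton_iff, Finset.mem_coe, mem_vars_iff_degreeOf_ne_zero,
    not_not]

end MvPolynomial

theorem stmt_11_general
    (L Y M : ℤ → Module.End ℂ (MvPolynomial (Fin 3) ℂ))
    (hLM : ∀ m n : ℤ, ⁅L m, M n⁆ = (-(3 * (m : ℂ) + (n : ℂ))) • M (m + n))
    (hYM : ∀ m n : ℤ, ⁅Y m, M n⁆ = 0)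
    (hMM : ∀ m n : ℤ, ⁅M m, M n⁆ = 0)
    (hL0 : ∀ f : MvPolynomial (Fin 3) ℂ, L 0 f = X 0 * f)
    (hM0 : ∀ f : MvPolynomial (Fin 3) ℂ, M 0 f = X 1 * f)
    (hY0 : ∀ f : MvPolynomial (Fin 3) ℂ, Y 0 f = X 2 * f)
    (hne : ∀ m : ℤ, M m 1 ≠ 0) :
    ∀ m : ℤ, M m 1 ∈ MvPolynomial.supported ℂ ({1, 2} : Set (Fin 3)) ∧ M m 1 ≠ 0 := by
  have hcomm (m : ℤ) (i : Fin 3) (f : MvPolynomial (Fin 3) ℂ) :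
      M m (X i * f) =
        (Fin.cons (X 0 + C (m : ℂ)) (fun j => X j.succ) : Fin 3 → MvPolynomial (Fin 3) ℂ) i *
          M m f := by
    refine Fin.cases ?_ (fun j => ?_) i
    · have hL := hLM 0 m
      simp only [Int.cast_zero, mul_zero, zero_add] at hL
      rw [map_mul_eq_of_lie_eq_smul hL0 hL, Fin.cons_zero, algebraMap_eq, map_neg, sub_neg_eq_add]
    · rw [Fin.cons_succ]
      fin_cases j
      · simpa using map_mul_eq_of_lie_eq_smul hM0 ((hMM 0 m).trans (zero_smul ℂ _).symm) f
      · simpa using map_mul_eq_of_lie_eq_smul hY0 ((hYM 0 m).trans (zero_smul ℂ _).symm) f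
  set φ := finSuccEquiv ℂ 2
  have hshift (m n : ℤ) :
      Polynomial.taylor (m : MvPolynomial (Fin 2) ℂ) (φ (M n 1)) * φ (M m 1) =
        Polynomial.taylor (n : MvPolynomial (Fin 2) ℂ) (φ (M m 1)) * φ (M n 1) := by
    have h := congrArg φ <|
      aeval_apply_one_mul_comm_of_commute (hcomm m) (hcomm n) (commute_iff_lie_eq.2 (hMM m n))
    rwa [map_mul, map_mul, finSuccEquiv_aeval_cons_add_C, finSuccEquiv_aeval_cons_add_C,
      map_intCast, map_intCast] at h
  have hsupp : ({1, 2} : Set (Fin 3)) = {0}ᶜ := by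
    ext i
    fin_cases i <;> simp
  intro m
  refine ⟨?_, hne m⟩
  rw [hsupp, mem_supported_compl_singleton_iff, ← natDegree_finSuccEquiv]
  exact Polynomial.natDegree_eq_zero_of_taylor_mul_comm
    (fun n => EmbeddingLike.map_ne_zero_iff.2 (hne n)) hshift m

/-- Lemma 3.3: Let `B = ℂ[L₀, M₀, Y₀]` (identified with `MvPolynomial (Fin 3) ℂ`,
`L₀ = X 0`, `M₀ = X 1`, `Y₀ = X 2`) be a rank-1 free `U(ℂL₀ ⊕ ℂM₀ ⊕ ℂY₀)`-module over
𝔱𝔰𝔳, the action being given by endomorphisms `L m`, `Y m`, `M m` satisfying the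
commutation relations of 𝔱𝔰𝔳, with `L 0`, `M 0`, `Y 0` acting by multiplication by the
variables, and suppose `a_m = M_m · 1 ≠ 0` for all `m`. Then each `a_m` does not
involve `L₀`, i.e. `a_m ∈ ℂ[M₀, Y₀] \ {0}`. -/
theorem stmt_11
    (L Y M : ℤ → Module.End ℂ (MvPolynomial (Fin 3) ℂ))
    (hLL : ∀ m n : ℤ, ⁅L m, L n⁆ = ((m : ℂ) - (n : ℂ)) • L (m + n))
    (hLY : ∀ m n : ℤ, ⁅L m, Y n⁆ = (-((m : ℂ) + (n : ℂ))) • Y (m + n))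
    (hLM : ∀ m n : ℤ, ⁅L m, M n⁆ = (-(3 * (m : ℂ) + (n : ℂ))) • M (m + n))
    (hYY : ∀ m n : ℤ, ⁅Y m, Y n⁆ = ((m : ℂ) - (n : ℂ)) • M (m + n))
    (hYM : ∀ m n : ℤ, ⁅Y m, M n⁆ = 0)
    (hMM : ∀ m n : ℤ, ⁅M m, M n⁆ = 0)
    (hL0 : ∀ f : MvPolynomial (Fin 3) ℂ, L 0 f = X 0 * f)
    (hM0 : ∀ f : MvPolynomial (Fin 3) ℂ, M 0 f = X 1 * f)
    (hY0 : ∀ f : MvPolynomial (Fin 3) ℂ, Y 0 f = X 2 * f)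
    (hne : ∀ m : ℤ, M m 1 ≠ 0) :
    ∀ m : ℤ, M m 1 ∈ MvPolynomial.supported ℂ ({1, 2} : Set (Fin 3)) ∧ M m 1 ≠ 0 :=
  stmt_11_general L Y M hLM hYM hMM hL0 hM0 hY0 hne
end

section
/- Suppose (c_{m,0}, c_{m,1}) ∈ ℂ² for m ∈ ℤ and (f_{m,1}) ∈ ℂ* satisfy c_{0,0}=0, c_{0,1}=1, f_{0,1}=1, and for all m,n ∈ ℤ: (-3m-n)c_{m+n,1} = -3m c_{n,1} c_{m,1} - n f_{m,1} c_{n,1} and (-3m-n)c_{m+n,0} = -3m c_{n,1} c_{m,0} - n f_{m,1} c_{n,0}, and moreover c_{m,1} ≠ 0 for all m. Then there is λ ∈ ℂ* with c_{m,1} = f_{m,1} = λ^m and c_{m,0} = 0 for all m ∈ ℤ. -/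
/-!
Setting `n = -3m` in the relation for `c_{·,1}` kills its left-hand side and leaves
`3m c_{-3m,1} (f_{m,1} - c_{m,1}) = 0`, so `f_{·,1} = c_{·,1}`. The relation at `n = 1` then reads
`c_{m+1,1} = c_{m,1} c_{1,1}`, whence `c_{m,1} = λ^m` with `λ = c_{1,1}`. Finally, comparing the
relation for `c_{·,0}` at `(m, -m)` and `(-m, m)`, where `c_{0,0} = 0`, gives `λ^{-m} c_{m,0} = 3 λ^m c_{-m,0} = 9 λ^{-m} c_{m,0}`.
-/

variable {K : Type*} [Field K]

/-- The relation `[L_m, M_n]·1 = -(3m+n) M_{m+n}·1` on the coefficients `a` of `M_n·1`, where `c`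
and `f` are the coefficients coming from the action of `L_m`. -/
def BracketRel (c f a : ℤ → K) : Prop :=
  ∀ m n : ℤ, ((-3 * m - n : ℤ) : K) * a (m + n) = -3 * (m : K) * c n * a m - (n : K) * f m * a n

namespace BracketRel

variable {c f a : ℤ → K}

theorem coeff_apply_zero (h : BracketRel c f a) (ha : a 1 ≠ 0) : f 0 = 1 := by
  have h01 := h 0 1
  push_cast at h01
  exact mul_right_cancel₀ ha (by linear_combination h01)

variable [CharZero K]

theorem apply_zero_of_self (h : BracketRel c f c) (hc : c 1 ≠ 0) : c 0 = 1 := by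
  have h10 := h 1 0
  push_cast at h10
  exact mul_right_cancel₀ hc (by linear_combination h10 / 3)

theorem coeff_eq_self (h : BracketRel c f c) (hc : ∀ m, c m ≠ 0) : f = c := by
  funext m
  rcases eq_or_ne m 0 with rfl | hm
  · rw [h.coeff_apply_zero (hc 1), h.apply_zero_of_self (hc 1)]
  · have hm3 := h m (-3 * m)
    push_cast at hm3
    have hfactor : (3 * (m : K) * c (-3 * m)) * (f m - c m) = 0 := by
      linear_combination -hm3
    have hne : 3 * (m : K) * c (-3 * m) ≠ 0 :=
      mul_ne_zero (mul_ne_zero three_ne_zero (Int.cast_ne_zero.mpr hm)) (hc _)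
    exact sub_eq_zero.mp ((mul_eq_zero.mp hfactor).resolve_left hne)

theorem map_add_one (h : BracketRel c c c) (m : ℤ) : c (m + 1) = c m * c 1 := by
  have hne : ((-3 * m - 1 : ℤ) : K) ≠ 0 := Int.cast_ne_zero.mpr (by omega)
  apply mul_left_cancel₀ hne
  rw [h m 1]
  push_cast
  ring

theorem eq_zero_of_zpow {lam : K} (hlam : lam ≠ 0)
    (h : BracketRel (fun n : ℤ => lam ^ n) (fun n : ℤ => lam ^ n) a) (h0 : a 0 = 0) : a = 0 := by
  funext m
  rcases eq_or_ne m 0 with rfl | hm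
  · exact h0
  have hpos := h m (-m)
  have hneg := h (-m) m
  simp only [add_neg_cancel, neg_add_cancel, h0, mul_zero] at hpos hneg
  push_cast at hpos hneg
  have h8 : 8 * (m : K) * lam ^ (-m) * a m = 0 := by
    linear_combination 3 * hpos - hneg
  have hne : 8 * (m : K) * lam ^ (-m) ≠ 0 :=
    mul_ne_zero (mul_ne_zero (by norm_num) (Int.cast_ne_zero.mpr hm)) (zpow_ne_zero _ hlam)
  exact (mul_eq_zero.mp h8).resolve_left hne

end BracketRel

theorem eq_zpow_of_map_add_one {G₀ : Type*} [GroupWithZero G₀] {c : ℤ → G₀} (h1 : c 1 ≠ 0)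
    (h : ∀ m, c (m + 1) = c m * c 1) (m : ℤ) : c m = c 1 ^ m := by
  induction m using Int.induction_on with
  | zero => simpa using (mul_left_eq_self₀.mp (h 0).symm).resolve_right h1
  | succ n ih => rw [h, ih, zpow_add_one₀ h1]
  | pred n ih =>
    have hn := h (-(n : ℤ) - 1)
    rw [sub_add_cancel, ih] at hn
    rw [zpow_sub_one₀ h1, hn, mul_inv_cancel_right₀ h1]

theorem stmt_12_general (c0 c1 f1 : ℤ → ℂ)
    (hc00 : c0 0 = 0)
    (heq1 : ∀ m n : ℤ, ((-3 * m - n : ℤ) : ℂ) * c1 (m + n)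
      = -3 * (m : ℂ) * c1 n * c1 m - (n : ℂ) * f1 m * c1 n)
    (heq0 : ∀ m n : ℤ, ((-3 * m - n : ℤ) : ℂ) * c0 (m + n)
      = -3 * (m : ℂ) * c1 n * c0 m - (n : ℂ) * f1 m * c0 n)
    (hc1 : ∀ m : ℤ, c1 m ≠ 0) :
    ∃ lam : ℂ, lam ≠ 0 ∧ ∀ m : ℤ, c1 m = lam ^ m ∧ f1 m = lam ^ m ∧ c0 m = 0 := by
  have hf : f1 = c1 := BracketRel.coeff_eq_self heq1 hc1
  rw [hf] at heq1 heq0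
  have hpow : ∀ m, c1 m = c1 1 ^ m := eq_zpow_of_map_add_one (hc1 1) (BracketRel.map_add_one heq1)
  rw [show c1 = fun n : ℤ => c1 1 ^ n from funext hpow] at heq0
  have hc0 : c0 = 0 := BracketRel.eq_zero_of_zpow (hc1 1) heq0 hc00
  exact ⟨c1 1, hc1 1, fun m => ⟨hpow m, hf ▸ hpow m, congrFun hc0 m⟩⟩

/-- The functional-equation step of Lemma 3.6: if `(c_{m,0}, c_{m,1}) ∈ ℂ²` and
`f_{m,1} ∈ ℂ*` satisfy `c_{0,0} = 0`, `c_{0,1} = 1`, `f_{0,1} = 1`,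
`(-3m-n) c_{m+n,1} = -3m c_{n,1} c_{m,1} - n f_{m,1} c_{n,1}`,
`(-3m-n) c_{m+n,0} = -3m c_{n,1} c_{m,0} - n f_{m,1} c_{n,0}` for all `m, n ∈ ℤ`,
and `c_{m,1} ≠ 0` for all `m`, then there is `λ ∈ ℂ*` with
`c_{m,1} = f_{m,1} = λ^m` and `c_{m,0} = 0` for all `m ∈ ℤ`. -/
theorem stmt_12 (c0 c1 f1 : ℤ → ℂ)
    (hc00 : c0 0 = 0) (hc01 : c1 0 = 1) (hf01 : f1 0 = 1)
    (hf1 : ∀ m : ℤ, f1 m ≠ 0)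
    (heq1 : ∀ m n : ℤ, ((-3 * m - n : ℤ) : ℂ) * c1 (m + n)
      = -3 * (m : ℂ) * c1 n * c1 m - (n : ℂ) * f1 m * c1 n)
    (heq0 : ∀ m n : ℤ, ((-3 * m - n : ℤ) : ℂ) * c0 (m + n)
      = -3 * (m : ℂ) * c1 n * c0 m - (n : ℂ) * f1 m * c0 n)
    (hc1 : ∀ m : ℤ, c1 m ≠ 0) :
    ∃ lam : ℂ, lam ≠ 0 ∧ ∀ m : ℤ, c1 m = lam ^ m ∧ f1 m = lam ^ m ∧ c0 m = 0 :=
  stmt_12_general c0 c1 f1 hc00 heq1 heq0 hc1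
end

section
/- Let λ ∈ ℂ*, c_1, c_2 ∈ ℂ, and T_{1,0} ∈ ℂ[M_0]. Suppose the family (T_{m,0})_{m∈ℤ}, T_{0,0}=0, satisfies: λT_{m,0} - λ^{2m+1}T_{-m,0} = m(λ^m T_{1,0} - λ^{m+2}T_{-1,0}) and λT_{m,0} + λ^{2m+1}T_{-m,0} = (m²-1)M_0 λ^m d/dM_0 (T_{1,0} + λ²T_{-1,0}) + λ^m T_{1,0} + λ^{m+2}T_{-1,0} for all m ≠ 0, together with T_{1,0} + λ²T_{-1,0} = c_2 M_0 + c_1. Then for all m ≠ 0, T_{m,0} = λ^{m-1}( m T_{1,0} + (c_2/2)(m² - m)M_0 + (c_1/2)(1 - m) ). -/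
/-!
Adding the two relations eliminates `T_{-m,0}` and leaves
`2λ T_{m,0} = (m + 1) λ^m T_{1,0} - (m - 1) λ^{m+2} T_{-1,0} + (m² - 1) λ^m c₂ M₀`;
substituting `λ² T_{-1,0} = c₂ M₀ + c₁ - T_{1,0}` and dividing by `2λ` gives the closed form.
-/

open Polynomial

theorem Polynomial.X_mul_derivative_C_mul_X_add_C {R : Type*} [Semiring R] (a b : R) :
    X * derivative (C a * X + C b) = C a * X := by
  simp [X_mul_C]

theorem C_mul_eq_of_sub_eq_of_add_eq {K : Type*} [Field K] (htwo : (2 : K) ≠ 0)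
    {lam c1 c2 : K} (hlam : lam ≠ 0) {m : ℤ} {P Q A B : K[X]}
    (h1 : C lam * P - C (lam ^ (2 * m + 1)) * Q
        = C ((m : K) * lam ^ m) * A - C ((m : K) * lam ^ (m + 2)) * B)
    (h2 : C lam * P + C (lam ^ (2 * m + 1)) * Q
        = C (((m : K) ^ 2 - 1) * lam ^ m) * (X * derivative (A + C (lam ^ 2) * B))
          + C (lam ^ m) * A + C (lam ^ (m + 2)) * B)
    (h3 : A + C (lam ^ 2) * B = C c2 * X + C c1) :
    C lam * P = C (lam ^ m) *
      (C (m : K) * A + C (c2 / 2 * ((m : K) ^ 2 - m)) * X + C (c1 / 2 * (1 - m))) := by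
  have hzpow : lam ^ (m + 2) = lam ^ m * lam ^ 2 := by
    rw [zpow_add₀ hlam, zpow_ofNat]
  have hhalf (a : K) : 2 * C (a / 2) = C a := by
    rw [← C_ofNat, ← C_mul, mul_div_cancel₀ _ htwo]
  rw [h3, X_mul_derivative_C_mul_X_add_C] at h2
  rw [hzpow] at h1 h2
  apply mul_left_cancel₀ (C_ne_zero.2 htwo)
  simp only [map_mul, map_sub, map_pow, map_one, map_intCast, map_ofNat] at h1 h2 h3 ⊢
  linear_combination h1 + h2 + (1 - m) * C (lam ^ m) * h3
    - C (lam ^ m) * ((m : K[X]) ^ 2 - m) * X * hhalf c2 - C (lam ^ m) * (1 - m) * hhalf c1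

theorem stmt_15_general (lam : ℂ) (hlam : lam ≠ 0) (c1 c2 : ℂ)
    (T : ℤ → Polynomial ℂ)
    (h1 : ∀ m : ℤ, m ≠ 0 →
      C lam * T m - C (lam ^ (2 * m + 1)) * T (-m)
        = C ((m : ℂ) * lam ^ m) * T 1 - C ((m : ℂ) * lam ^ (m + 2)) * T (-1))
    (h2 : ∀ m : ℤ, m ≠ 0 →
      C lam * T m + C (lam ^ (2 * m + 1)) * T (-m)
        = C (((m : ℂ) ^ 2 - 1) * lam ^ m)
            * (X * derivative (T 1 + C (lam ^ 2) * T (-1)))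
          + C (lam ^ m) * T 1 + C (lam ^ (m + 2)) * T (-1))
    (h3 : T 1 + C (lam ^ 2) * T (-1) = C c2 * X + C c1) :
    ∀ m : ℤ, m ≠ 0 →
      T m = C (lam ^ (m - 1)) *
        (C (m : ℂ) * T 1 + C (c2 / 2 * ((m : ℂ) ^ 2 - (m : ℂ))) * X
          + C (c1 / 2 * (1 - (m : ℂ)))) := by
  intro m hm
  have hsum := C_mul_eq_of_sub_eq_of_add_eq two_ne_zero hlam (h1 m hm) (h2 m hm) h3
  have hpow : lam ^ m = lam * lam ^ (m - 1) := by
    rw [zpow_sub_one₀ hlam, mul_comm, inv_mul_cancel_right₀ hlam]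
  rw [hpow, C_mul, mul_assoc] at hsum
  exact mul_left_cancel₀ (C_ne_zero.2 hlam) hsum

/-- The closed form of the constant terms `T_{m,0}` in Lemma 3.9: let `λ ∈ ℂ*`,
`c₁, c₂ ∈ ℂ`, `T_{m,0} ∈ ℂ[M₀]` with `T_{0,0} = 0`, satisfying for all `m ≠ 0`
`λ T_{m,0} - λ^{2m+1} T_{-m,0} = m (λ^m T_{1,0} - λ^{m+2} T_{-1,0})` and
`λ T_{m,0} + λ^{2m+1} T_{-m,0} = (m²-1) M₀ λ^m d/dM₀ (T_{1,0} + λ² T_{-1,0})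
 + λ^m T_{1,0} + λ^{m+2} T_{-1,0}`, together with `T_{1,0} + λ² T_{-1,0} = c₂ M₀ + c₁`.
Then for all `m ≠ 0`,
`T_{m,0} = λ^{m-1} (m T_{1,0} + (c₂/2)(m² - m) M₀ + (c₁/2)(1 - m))`. -/
theorem stmt_15 (lam : ℂ) (hlam : lam ≠ 0) (c1 c2 : ℂ)
    (T : ℤ → Polynomial ℂ) (hT0 : T 0 = 0)
    (h1 : ∀ m : ℤ, m ≠ 0 →
      C lam * T m - C (lam ^ (2 * m + 1)) * T (-m)
        = C ((m : ℂ) * lam ^ m) * T 1 - C ((m : ℂ) * lam ^ (m + 2)) * T (-1))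
    (h2 : ∀ m : ℤ, m ≠ 0 →
      C lam * T m + C (lam ^ (2 * m + 1)) * T (-m)
        = C (((m : ℂ) ^ 2 - 1) * lam ^ m)
            * (X * derivative (T 1 + C (lam ^ 2) * T (-1)))
          + C (lam ^ m) * T 1 + C (lam ^ (m + 2)) * T (-1))
    (h3 : T 1 + C (lam ^ 2) * T (-1) = C c2 * X + C c1) :
    ∀ m : ℤ, m ≠ 0 →
      T m = C (lam ^ (m - 1)) *
        (C (m : ℂ) * T 1 + C (c2 / 2 * ((m : ℂ) ^ 2 - (m : ℂ))) * X
          + C (c1 / 2 * (1 - (m : ℂ)))) :=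
  stmt_15_general lam hlam c1 c2 T h1 h2 h3
end

section
/- Let λ ∈ ℂ* and suppose (e_{m,1})_{m∈ℤ} ⊂ ℂ[M_0] satisfy m λ^m e_{n,1} - n λ^n e_{m,1} = (m-n)λ^{m+n} for all m, n ∈ ℤ, with e_{0,1} = 1 (from p_0 = Y_0). Then there exists T_1 ∈ ℂ[M_0] with e_{m,1} = m λ^m T_1 + λ^m for all m ∈ ℤ. -/
open Polynomial

theorem Polynomial.eq_C_mul_add_C_of_C_mul_sub_C_mul {K : Type*} [Field K] {lam : K}
    (hlam : lam ≠ 0) (m : ℤ) {p q : K[X]}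
    (h : C ((m : K) * lam ^ m) * q - C lam * p = C (((m : K) - 1) * lam ^ (m + 1))) :
    p = C ((m : K) * lam ^ m) * (C lam⁻¹ * q - 1) + C (lam ^ m) := by
  have hinv : C lam⁻¹ * C lam = (1 : K[X]) := by rw [← C_mul, inv_mul_cancel₀ hlam, C_1]
  rw [zpow_add_one₀ hlam] at h
  simp only [C_mul, C_sub, C_1] at h ⊢
  linear_combination (-C lam⁻¹) * h - (p + (C (m : K) - 1) * C (lam ^ m)) * hinv

theorem stmt_17_general (lam : ℂ) (hlam : lam ≠ 0) (e : ℤ → Polynomial ℂ)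
    (h : ∀ m n : ℤ, C ((m : ℂ) * lam ^ m) * e n - C ((n : ℂ) * lam ^ n) * e m
      = C (((m : ℂ) - (n : ℂ)) * lam ^ (m + n))) :
    ∃ T : Polynomial ℂ, ∀ m : ℤ, e m = C ((m : ℂ) * lam ^ m) * T + C (lam ^ m) :=
  ⟨C lam⁻¹ * e 1 - 1, fun m => eq_C_mul_add_C_of_C_mul_sub_C_mul hlam m (by simpa using h m 1)⟩

/-- Equation (3.19) in Lemma 3.7(b): let `λ ∈ ℂ*` and `(e_{m,1})_{m∈ℤ} ⊂ ℂ[M₀]`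
satisfy `m λ^m e_{n,1} - n λ^n e_{m,1} = (m-n) λ^{m+n}` for all `m, n ∈ ℤ`,
with `e_{0,1} = 1`. Then there exists `T₁ ∈ ℂ[M₀]` with
`e_{m,1} = m λ^m T₁ + λ^m` for all `m ∈ ℤ`. -/
theorem stmt_17 (lam : ℂ) (hlam : lam ≠ 0) (e : ℤ → Polynomial ℂ)
    (he0 : e 0 = 1)
    (h : ∀ m n : ℤ, C ((m : ℂ) * lam ^ m) * e n - C ((n : ℂ) * lam ^ n) * e m
      = C (((m : ℂ) - (n : ℂ)) * lam ^ (m + n))) :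
    ∃ T : Polynomial ℂ, ∀ m : ℤ, e m = C ((m : ℂ) * lam ^ m) * T + C (lam ^ m) :=
  stmt_17_general lam hlam e h
end
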